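/- Let C be a rigid symmetric monoidal ℚ-linear category with unit object 1 satisfying End(1) ≅ ℚ. If α: 1 → M is a ⊗-nilpotent morphism and β: M → 1 is any morphism, then β∘α = 0. -/

import Mathlib

open CategoryTheory MonoidalCategory

/-- m-fold tensor power of an object (with `X^{⊗0} = 𝟙_ C`). -/
def tensorObjPow (C : Type*) [Category C] [MonoidalCategory C] (X : C) : ℕ → C
  | 0 => 𝟙_ C
  | n + 1 => X ⊗ tensorObjPow C X n

/-- m-fold tensor power of a morphism. -/
def tensorHomPow {C : Type*} [Category C] [MonoidalCategory C] {X Y : C}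
    (α : X ⟶ Y) : (n : ℕ) → (tensorObjPow C X n ⟶ tensorObjPow C Y n)
  | 0 => 𝟙 (𝟙_ C)
  | n + 1 => α ⊗ₘ tensorHomPow α n

/-- Iso of the n-fold tensor power of the unit with the unit. -/
def unitPowIso (C : Type*) [Category C] [MonoidalCategory C] :
    (n : ℕ) → (tensorObjPow C (𝟙_ C) n ≅ 𝟙_ C)
  | 0 => Iso.refl _
  | n + 1 => whiskerLeftIso (𝟙_ C) (unitPowIso C n) ≪≫ λ_ _

lemma unit_whiskerRight_comm {C : Type*} [Category C] [MonoidalCategory C]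
    (φ : 𝟙_ C ⟶ 𝟙_ C) {X : C} (f : X ⟶ 𝟙_ C) :
    φ ▷ X ≫ (λ_ X).hom ≫ f = (λ_ X).hom ≫ f ≫ φ := by
  have h1 : (λ_ X).hom ≫ f = 𝟙_ C ◁ f ≫ (λ_ (𝟙_ C)).hom :=
    (MonoidalCategory.leftUnitor_naturality f).symm
  have h2 : 𝟙_ C ◁ f ≫ φ ▷ 𝟙_ C = φ ▷ X ≫ 𝟙_ C ◁ f := MonoidalCategory.whisker_exchange φ f
  have h3 : φ ▷ 𝟙_ C ≫ (λ_ (𝟙_ C)).hom = (λ_ (𝟙_ C)).hom ≫ φ := by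
    rw [MonoidalCategory.whiskerRight_id, Category.assoc, Category.assoc, unitors_equal]
    simp
  calc φ ▷ X ≫ (λ_ X).hom ≫ f = φ ▷ X ≫ 𝟙_ C ◁ f ≫ (λ_ (𝟙_ C)).hom := by rw [h1]
    _ = (𝟙_ C ◁ f ≫ φ ▷ 𝟙_ C) ≫ (λ_ (𝟙_ C)).hom := by rw [h2]; simp
    _ = 𝟙_ C ◁ f ≫ (λ_ (𝟙_ C)).hom ≫ φ := by rw [Category.assoc, h3]
    _ = (λ_ X).hom ≫ f ≫ φ := by rw [← Category.assoc, ← h1, Category.assoc]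

lemma tensorHomPow_unit_conj {C : Type*} [Category C] [MonoidalCategory C]
    (φ : End (𝟙_ C)) : ∀ n : ℕ,
    tensorHomPow (φ : 𝟙_ C ⟶ 𝟙_ C) n =
      (unitPowIso C n).hom ≫ (φ ^ n : End (𝟙_ C)) ≫ (unitPowIso C n).inv
  | 0 => by
    show 𝟙 (𝟙_ C) = 𝟙 _ ≫ (φ ^ 0 : End (𝟙_ C)) ≫ 𝟙 _
    simp [End.one_def]
  | n + 1 => by
    show (φ : 𝟙_ C ⟶ 𝟙_ C) ⊗ₘ tensorHomPow (φ : 𝟙_ C ⟶ 𝟙_ C) n = _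
    rw [tensorHomPow_unit_conj φ n, pow_succ, End.mul_def]
    simp only [unitPowIso, Iso.trans_hom, Iso.trans_inv, whiskerLeftIso_hom, whiskerLeftIso_inv,
      MonoidalCategory.tensorHom_def, id_whiskerLeft, MonoidalCategory.whiskerLeft_comp,
      Category.assoc, Iso.inv_hom_id_assoc]
    have key := unit_whiskerRight_comm (C := C) (φ : 𝟙_ C ⟶ 𝟙_ C)
      ((unitPowIso C n).hom ≫ ((φ ^ n : End (𝟙_ C)) : 𝟙_ C ⟶ 𝟙_ C))
    have comm : ((φ ^ n : End (𝟙_ C)) : 𝟙_ C ⟶ 𝟙_ C) ≫ (φ : 𝟙_ C ⟶ 𝟙_ C)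
        = (φ : 𝟙_ C ⟶ 𝟙_ C) ≫ ((φ ^ n : End (𝟙_ C)) : 𝟙_ C ⟶ 𝟙_ C) := by
      show (φ * φ ^ n : End (𝟙_ C)) = (φ ^ n * φ : End (𝟙_ C))
      rw [← pow_succ', ← pow_succ]
    calc (φ : 𝟙_ C ⟶ 𝟙_ C) ▷ tensorObjPow C (𝟙_ C) n ≫ (λ_ (tensorObjPow C (𝟙_ C) n)).hom ≫
          (unitPowIso C n).hom ≫ ((φ ^ n : End (𝟙_ C)) : 𝟙_ C ⟶ 𝟙_ C) ≫ (unitPowIso C n).inv ≫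
          (λ_ (tensorObjPow C (𝟙_ C) n)).inv
        = ((φ : 𝟙_ C ⟶ 𝟙_ C) ▷ tensorObjPow C (𝟙_ C) n ≫ (λ_ (tensorObjPow C (𝟙_ C) n)).hom ≫
            ((unitPowIso C n).hom ≫ ((φ ^ n : End (𝟙_ C)) : 𝟙_ C ⟶ 𝟙_ C))) ≫
            (unitPowIso C n).inv ≫ (λ_ (tensorObjPow C (𝟙_ C) n)).inv := by
          simp only [Category.assoc]
      _ = ((λ_ (tensorObjPow C (𝟙_ C) n)).hom ≫
            ((unitPowIso C n).hom ≫ ((φ ^ n : End (𝟙_ C)) : 𝟙_ C ⟶ 𝟙_ C)) ≫ (φ : 𝟙_ C ⟶ 𝟙_ C)) ≫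
            (unitPowIso C n).inv ≫ (λ_ (tensorObjPow C (𝟙_ C) n)).inv := by rw [key]
      _ = (λ_ (tensorObjPow C (𝟙_ C) n)).hom ≫ (unitPowIso C n).hom ≫
            (((φ ^ n : End (𝟙_ C)) : 𝟙_ C ⟶ 𝟙_ C) ≫ (φ : 𝟙_ C ⟶ 𝟙_ C)) ≫
            (unitPowIso C n).inv ≫ (λ_ (tensorObjPow C (𝟙_ C) n)).inv := by
          simp only [Category.assoc]
      _ = (λ_ (tensorObjPow C (𝟙_ C) n)).hom ≫ (unitPowIso C n).hom ≫ (φ : 𝟙_ C ⟶ 𝟙_ C) ≫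
            ((φ ^ n : End (𝟙_ C)) : 𝟙_ C ⟶ 𝟙_ C) ≫
            (unitPowIso C n).inv ≫ (λ_ (tensorObjPow C (𝟙_ C) n)).inv := by
          rw [comm]; simp only [Category.assoc]
      _ = (𝟙_ C ◁ (unitPowIso C n).hom ≫ (λ_ (𝟙_ C)).hom) ≫ (φ : 𝟙_ C ⟶ 𝟙_ C) ≫
            ((φ ^ n : End (𝟙_ C)) : 𝟙_ C ⟶ 𝟙_ C) ≫ ((λ_ (𝟙_ C)).inv ≫ 𝟙_ C ◁ (unitPowIso C n).inv) := by
          simp only [Category.assoc, MonoidalCategory.leftUnitor_naturality_assoc,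
            MonoidalCategory.leftUnitor_inv_naturality]

/-- In a rigid symmetric monoidal ℚ-linear category with
End(𝟙) ≅ ℚ, if α : 𝟙 → M is ⊗-nilpotent and β : M → 𝟙 is any morphism,
then β∘α = 0. -/
theorem stmt_9 (C : Type*) [Category C] [Preadditive C] [Linear ℚ C]
    [MonoidalCategory C] [MonoidalPreadditive C] [MonoidalLinear ℚ C]
    [SymmetricCategory C] [RigidCategory C]
    (e : End (𝟙_ C) ≃ₐ[ℚ] ℚ)
    (M : C) (α : 𝟙_ C ⟶ M) (β : M ⟶ 𝟙_ C)
    (hα : ∃ m : ℕ, 1 ≤ m ∧ tensorHomPow α m = 0) :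
    α ≫ β = 0 := by
  obtain ⟨m, hm, h0⟩ := hα
  set φ : End (𝟙_ C) := α ≫ β with hφ
  have hpow : ∀ k : ℕ, tensorHomPow (φ : 𝟙_ C ⟶ 𝟙_ C) k = tensorHomPow α k ≫ tensorHomPow β k := by
    intro k
    induction k with
    | zero =>
      show 𝟙 (𝟙_ C) = 𝟙 (𝟙_ C) ≫ 𝟙 (𝟙_ C)
      simp
    | succ n ih =>
      show (α ≫ β) ⊗ₘ tensorHomPow (α ≫ β) n = (α ⊗ₘ tensorHomPow α n) ≫ (β ⊗ₘ tensorHomPow β n)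
      rw [show tensorHomPow (α ≫ β) n = tensorHomPow (φ : 𝟙_ C ⟶ 𝟙_ C) n from rfl, ih,
        tensorHom_comp_tensorHom]
  have h1 : tensorHomPow φ m = 0 := by rw [hpow m, h0, Limits.zero_comp]
  rw [tensorHomPow_unit_conj φ m] at h1
  have h2 : (φ ^ m : End (𝟙_ C)) = 0 := by
    have := congrArg (fun f => (unitPowIso C m).inv ≫ f ≫ (unitPowIso C m).hom) h1
    simpa using this
  have h3 : (e φ) ^ m = 0 := by rw [← map_pow, h2, map_zero]
  have h4 : e φ = 0 := pow_eq_zero_iff (by omega : m ≠ 0) |>.mp h3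
  have h5 : φ = 0 := e.injective (by rw [h4, map_zero])
  exact h5
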